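/- Let p, q be nonnegative integers with p ≥ 1. Then the ratio A_{p,q}(i,j)/A_{p-1,q}(i,j) tends to infinity as both i and j tend to infinity: for every real number M there exist I and J such that A_{p,q}(i,j)/A_{p-1,q}(i,j) > M whenever i ≥ I and j ≥ J. -/

import Mathlib

/-!
Comparing the recurrences for the parameters `p` and `p + 1` gives the exact identity
`(p+q+2) A_{p+1,q}(i,j+1) = (j+p+q+3) A_{p,q}(i,j+1) + (i+1) A_{p,q}(i+1,j)`.
Dropping the last (nonnegative) term, `A_{p+1,q}(i,j) / A_{p,q}(i,j) ≥ (j+p+q+2)/(p+q+2)`,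
which is unbounded in `j` alone, uniformly in `i`.
-/

/-- The generalized Eulerian number `eulerA p q i j` counts the paths in the Euler graph
from `(p, q)` to `(p + i, q + j)`.  It is defined by the initial conditions
`eulerA p q i 0 = (q+1)^i`, `eulerA p q 0 j = (p+1)^j` and the recurrence
`eulerA p q i j = (j+q+1) * eulerA p q (i-1) j + (i+p+1) * eulerA p q i (j-1)`. -/
def eulerA (p q : ℕ) : ℕ → ℕ → ℕ
  | i, 0 => (q + 1) ^ i
  | 0, j + 1 => (p + 1) ^ (j + 1)
  | i + 1, j + 1 =>
      (j + 1 + q + 1) * eulerA p q i (j + 1) + (i + 1 + p + 1) * eulerA p q (i + 1) j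

section EulerA

variable (p q : ℕ)

@[simp] lemma eulerA_zero_right (i : ℕ) : eulerA p q i 0 = (q + 1) ^ i := by
  rw [eulerA]

@[simp] lemma eulerA_zero_succ (j : ℕ) : eulerA p q 0 (j + 1) = (p + 1) ^ (j + 1) := by
  rw [eulerA]

lemma eulerA_succ_succ (i j : ℕ) :
    eulerA p q (i + 1) (j + 1)
      = (j + 1 + q + 1) * eulerA p q i (j + 1) + (i + 1 + p + 1) * eulerA p q (i + 1) j := by
  rw [eulerA]

lemma eulerA_pos : ∀ i j, 0 < eulerA p q i j
  | i, 0 => by simp only [eulerA_zero_right]; positivity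
  | 0, j + 1 => by simp only [eulerA_zero_succ]; positivity
  | i + 1, j + 1 => by
    have := eulerA_pos i (j + 1)
    rw [eulerA_succ_succ]
    positivity

lemma add_two_mul_eulerA_succ (i j : ℕ) :
    (p + q + 2) * eulerA (p + 1) q i (j + 1)
      = (j + p + q + 3) * eulerA p q i (j + 1) + (i + 1) * eulerA p q (i + 1) j := by
  induction i generalizing j with
  | zero =>
    induction j with
    | zero => simp only [eulerA_zero_succ, eulerA_zero_right]; ring
    | succ j ih =>
      simp only [eulerA_zero_succ, eulerA_succ_succ] at ih ⊢
      linear_combination (p + 2) * ih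
  | succ i ih =>
    induction j with
    | zero =>
      have h := ih 0
      simp only [eulerA_succ_succ, eulerA_zero_right] at h ⊢
      linear_combination (q + 2) * h
    | succ j ihj =>
      have h := ih (j + 1)
      rw [eulerA_succ_succ (p + 1) q i (j + 1), eulerA_succ_succ p q i (j + 1),
        eulerA_succ_succ p q (i + 1) j]
      linear_combination (j + q + 3) * h + (i + p + 3) * ihj

lemma add_mul_eulerA_le (i j : ℕ) :
    (j + p + q + 2) * eulerA p q i j ≤ (p + q + 2) * eulerA (p + 1) q i j := by
  cases j with
  | zero => simp
  | succ j =>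
    rw [add_two_mul_eulerA_succ]
    nlinarith

lemma div_le_eulerA_div_eulerA (i j : ℕ) :
    ((j + p + q + 2 : ℕ) : ℝ) / (p + q + 2 : ℕ)
      ≤ (eulerA (p + 1) q i j : ℝ) / eulerA p q i j := by
  rw [div_le_div_iff₀ (by positivity) (mod_cast eulerA_pos p q i j)]
  exact_mod_cast (add_mul_eulerA_le p q i j).trans_eq (mul_comm _ _)

end EulerA

theorem stmt10 (p q : ℕ) (hp : 1 ≤ p) :
    ∀ M : ℝ, ∃ I J : ℕ, ∀ i j : ℕ, I ≤ i → J ≤ j →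
      M < (eulerA p q i j : ℝ) / (eulerA (p - 1) q i j) := by
  obtain ⟨p, rfl⟩ := Nat.exists_eq_add_of_le' hp
  intro M
  obtain ⟨J, hJ⟩ := exists_nat_gt (M * (p + q + 2 : ℕ))
  refine ⟨0, J, fun i j _ hj => ?_⟩
  refine lt_of_lt_of_le ?_ (div_le_eulerA_div_eulerA p q i j)
  rw [lt_div_iff₀ (by positivity)]
  have hJj : (J : ℝ) ≤ j := mod_cast hj
  push_cast at hJ ⊢
  linarith [p.cast_nonneg (α := ℝ), q.cast_nonneg (α := ℝ)]
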